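/- arXiv:1601.05515 — 3 statements merged into one kernel-verified Lean document; each statement's English description precedes it below -/
import Mathlib

section
/- Let k ≥ 3 be a fixed integer and (i₁, i₂, …, i_{k−1}) ∈ {0,1}^{k−1}. There is a constant c_k > 0 such that for all positive integers n₁, …, n_k with √n₁ + (−1)^{i₁}√n₂ + (−1)^{i₂}√n₃ + ⋯ + (−1)^{i_{k−1}}√n_k ≠ 0, one has |√n₁ + (−1)^{i₁}√n₂ + ⋯ + (−1)^{i_{k−1}}√n_k| ≥ c_k · max(n₁, n₂, …, n_k)^{−(2^{k−2} − 1/2)}. -/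
/-!
The `2 ^ k` sign sums `x = ±a₁ ± ⋯ ± a_k` of `aᵢ = √nᵢ` are the roots of `P = ∏ (X - x)`, and
`P ∈ ℤ[X]`: adjoining one more `±a` with `a² ∈ ℤ` replaces `q(X)` by `q(X - a) q(X + a)`, which
is again integral. The lowest nonzero coefficient of `P` is `±∏_{x ≠ 0} x`, a nonzero integer.
If `S ≠ 0` is one of the sums, then `S` and `-S` both occur, and the remaining `2 ^ k - 2` roots
are at most `B = ∑ aᵢ ≤ k √N` in absolute value, so `1 ≤ S² B ^ (2 ^ k - 2)`.
-/

open Polynomial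

/-- The `2 ^ k` sums `±a 0 ± ⋯ ± a (k - 1)`, with multiplicity. -/
def signSums {R : Type*} [Ring R] : {k : ℕ} → (Fin k → R) → Multiset R
  | 0, _ => {0}
  | _ + 1, a => (signSums (Fin.tail a)).map (· + a 0) + (signSums (Fin.tail a)).map (· - a 0)

section Ring

variable {R : Type*} [Ring R]

theorem card_signSums {k : ℕ} (a : Fin k → R) : Multiset.card (signSums a) = 2 ^ k := by
  induction k with
  | zero => rfl
  | succ k ih => simp [signSums, ih, pow_succ, mul_two]

theorem neg_mem_signSums {k : ℕ} (a : Fin k → R) {x : R} (hx : x ∈ signSums a) :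
    -x ∈ signSums a := by
  induction k generalizing x with
  | zero => simp_all [signSums]
  | succ k ih =>
    simp only [signSums, Multiset.mem_add, Multiset.mem_map] at hx ⊢
    rcases hx with ⟨y, hy, rfl⟩ | ⟨y, hy, rfl⟩
    · exact .inr ⟨-y, ih _ hy, by abel⟩
    · exact .inl ⟨-y, ih _ hy, by abel⟩

theorem sum_mul_mem_signSums {k : ℕ} (ε a : Fin k → R) (hε : ∀ i, ε i = 1 ∨ ε i = -1) :
    ∑ i, ε i * a i ∈ signSums a := by
  induction k with
  | zero => simp [signSums]
  | succ k ih =>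
    have h := ih (Fin.tail ε) (Fin.tail a) (fun i => hε i.succ)
    simp only [Fin.tail] at h
    rw [Fin.sum_univ_succ, add_comm (ε 0 * a 0)]
    simp only [signSums, Multiset.mem_add, Multiset.mem_map]
    rcases hε 0 with h0 | h0
    · exact .inl ⟨_, h, by simp [h0]⟩
    · exact .inr ⟨_, h, by simp [h0, sub_eq_add_neg]⟩

end Ring

theorem abs_le_of_mem_signSums {R : Type*} [Ring R] [LinearOrder R] [IsOrderedRing R] {k : ℕ}
    (a : Fin k → R) {x : R} (hx : x ∈ signSums a) : |x| ≤ ∑ i, |a i| := by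
  induction k generalizing x with
  | zero => simp_all [signSums]
  | succ k ih =>
    simp only [signSums, Multiset.mem_add, Multiset.mem_map] at hx
    rw [Fin.sum_univ_succ, add_comm]
    rcases hx with ⟨y, hy, rfl⟩ | ⟨y, hy, rfl⟩
    · exact (abs_add_le _ _).trans (add_le_add_left (ih _ hy) _)
    · exact (abs_sub _ _).trans (add_le_add_left (ih _ hy) _)

noncomputable def intPolys (R : Type*) [CommRing R] : Subring R[X] :=
  (mapRingHom (Int.castRingHom R)).range

section CommRing

variable {R : Type*} [CommRing R]

theorem C_intCast_mem_intPolys (m : ℤ) : C (m : R) ∈ intPolys R :=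
  ⟨C m, by simp⟩

theorem X_mem_intPolys : (X : R[X]) ∈ intPolys R :=
  ⟨X, by simp⟩

/-- Writing `p(X ∓ a) = u ± a v` with `u, v` integral, the product is `u² - a² v²`. -/
theorem comp_X_sub_C_mul_comp_X_add_C_mem_intPolys {a : R} (ha : ∃ m : ℤ, a ^ 2 = m)
    {p : R[X]} (hp : p ∈ intPolys R) : p.comp (X - C a) * p.comp (X + C a) ∈ intPolys R := by
  obtain ⟨m, hm⟩ := ha
  have hCa : C a * C a = C (m : R) := by rw [← C_mul, ← sq, hm]
  have hdecomp : ∀ q : ℤ[X], ∃ u ∈ intPolys R, ∃ v ∈ intPolys R,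
      (q.map (Int.castRingHom R)).comp (X - C a) = u + C a * v ∧
      (q.map (Int.castRingHom R)).comp (X + C a) = u - C a * v := by
    intro q
    induction q using Polynomial.induction_on with
    | C c => exact ⟨C (c : R), C_intCast_mem_intPolys c, 0, zero_mem _, by simp, by simp⟩
    | add p q hp hq =>
      obtain ⟨u₁, hu₁, v₁, hv₁, h₁, h₁'⟩ := hp
      obtain ⟨u₂, hu₂, v₂, hv₂, h₂, h₂'⟩ := hq
      refine ⟨u₁ + u₂, add_mem hu₁ hu₂, v₁ + v₂, add_mem hv₁ hv₂, ?_, ?_⟩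
      · simp only [Polynomial.map_add, add_comp, h₁, h₂]; ring
      · simp only [Polynomial.map_add, add_comp, h₁', h₂']; ring
    | monomial n c ih =>
      obtain ⟨u, hu, v, hv, h, h'⟩ := ih
      refine ⟨u * X - C (m : R) * v, sub_mem (mul_mem hu X_mem_intPolys)
          (mul_mem (C_intCast_mem_intPolys m) hv),
        v * X - u, sub_mem (mul_mem hv X_mem_intPolys) hu, ?_, ?_⟩
      · simp only [Polynomial.map_mul, Polynomial.map_pow, map_C, map_X, pow_succ, ← mul_assoc,
          mul_comp, X_comp] at h ⊢
        rw [h]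
        linear_combination (-v) * hCa
      · simp only [Polynomial.map_mul, Polynomial.map_pow, map_C, map_X, pow_succ, ← mul_assoc,
          mul_comp, X_comp] at h' ⊢
        rw [h']
        linear_combination (-v) * hCa
  obtain ⟨q, rfl⟩ := hp
  obtain ⟨u, hu, v, hv, h, h'⟩ := hdecomp q
  rw [coe_mapRingHom, h, h']
  have : (u + C a * v) * (u - C a * v) = u * u - C (m : R) * (v * v) := by
    linear_combination (-(v * v)) * hCa
  rw [this]
  exact sub_mem (mul_mem hu hu) (mul_mem (C_intCast_mem_intPolys m) (mul_mem hv hv))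

theorem prod_comp_X_sub_C_signSums_mem_intPolys {k : ℕ} (a : Fin k → R)
    (ha : ∀ i, ∃ m : ℤ, a i ^ 2 = m) {q : R[X]} (hq : q ∈ intPolys R) :
    ((signSums a).map fun x => q.comp (X - C x)).prod ∈ intPolys R := by
  induction k generalizing q with
  | zero => simpa [signSums] using hq
  | succ k ih =>
    have hshift : ∀ x b : R, (X - C (x + b) : R[X]) = (X - C b).comp (X - C x) ∧
        (X - C (x - b) : R[X]) = (X + C b).comp (X - C x) := fun x b =>
      ⟨by simp only [sub_comp, X_comp, C_comp, C_add]; ring,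
        by simp only [add_comp, X_comp, C_comp, C_sub]; ring⟩
    convert ih (Fin.tail a) (fun i => ha i.succ)
      (comp_X_sub_C_mul_comp_X_add_C_mem_intPolys (ha 0) hq) using 1
    rw [signSums, Multiset.map_add, Multiset.prod_add, Multiset.map_map, Multiset.map_map,
      ← Multiset.prod_map_mul]
    refine congrArg _ (Multiset.map_congr rfl fun x _ => ?_)
    simp only [Function.comp_apply, (hshift x (a 0)).1, (hshift x (a 0)).2, ← comp_assoc, mul_comp]

end CommRing

theorem one_le_abs_prod_filter_ne_zero {R : Type*} [CommRing R] [LinearOrder R]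
    [IsStrictOrderedRing R] (s : Multiset R)
    (hs : (s.map fun x => X - C x).prod ∈ intPolys R) : 1 ≤ |(s.filter (· ≠ 0)).prod| := by
  obtain ⟨r, hr⟩ := hs
  set s₀ := s.filter (· ≠ 0)
  have hsplit : s = Multiset.replicate (s.count 0) 0 + s₀ := by
    rw [← Multiset.filter_eq', Multiset.filter_add_not]
  have hprod : (s.map fun x => X - C x).prod =
      X ^ s.count 0 * (s₀.map fun x => X - C x).prod := by
    conv_lhs => rw [hsplit]
    simp [Multiset.map_replicate]
  have hcoeff : (r.coeff (s.count 0) : R) = (-1) ^ Multiset.card s₀ * s₀.prod := by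
    rw [← eq_intCast (Int.castRingHom R), ← coeff_map, ← coe_mapRingHom, hr, hprod,
      coeff_X_pow_mul', if_pos le_rfl, Nat.sub_self, coeff_zero_eq_eval_zero, eval_multiset_prod,
      Multiset.map_map]
    simp [← Multiset.prod_map_neg]
  have hne : s₀.prod ≠ 0 := Multiset.prod_ne_zero (by simp [s₀])
  have hr0 : r.coeff (s.count 0) ≠ 0 := by
    intro h
    rw [h, Int.cast_zero, eq_comm] at hcoeff
    exact hne ((mul_eq_zero.mp hcoeff).resolve_left (pow_ne_zero _ (by norm_num)))
  calc (1 : R) ≤ |(r.coeff (s.count 0) : R)| := by exact_mod_cast Int.one_le_abs hr0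
    _ = |s₀.prod| := by simp [hcoeff, abs_mul]

theorem abs_prod_filter_ne_zero_le {R : Type*} [CommRing R] [LinearOrder R]
    [IsStrictOrderedRing R] {s : Multiset R} {S B : R} (hS : S ∈ s) (hnegS : -S ∈ s)
    (hS0 : S ≠ 0) (hB : ∀ x ∈ s, |x| ≤ B) (hB1 : 1 ≤ B) :
    |(s.filter (· ≠ 0)).prod| ≤ S ^ 2 * B ^ (Multiset.card s - 2) := by
  obtain ⟨t, ht⟩ := Multiset.exists_cons_of_mem
    (Multiset.mem_filter.mpr ⟨hS, hS0⟩ : S ∈ s.filter (· ≠ 0))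
  have hnegSt : -S ∈ t := by
    have h : -S ∈ s.filter (· ≠ 0) := Multiset.mem_filter.mpr ⟨hnegS, neg_ne_zero.mpr hS0⟩
    rw [ht, Multiset.mem_cons] at h
    exact h.resolve_left fun h => hS0 (by linarith)
  obtain ⟨u, rfl⟩ := Multiset.exists_cons_of_mem hnegSt
  have hu : ∀ x ∈ u, |x| ≤ B := fun x hx =>
    hB x (Multiset.mem_of_mem_filter (s := s) (by rw [ht]; simp [hx]))
  have hcard : Multiset.card u + 2 ≤ Multiset.card s := by
    have := Multiset.card_le_card (Multiset.filter_le (· ≠ 0) s)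
    simp only [ht, Multiset.card_cons] at this
    omega
  have habs : |u.prod| ≤ B ^ Multiset.card u := by
    rw [show |u.prod| = absHom u.prod from rfl, map_multiset_prod]
    exact Multiset.prod_map_le_pow_card (fun x _ => abs_nonneg x) hu
  calc |(s.filter (· ≠ 0)).prod| = S ^ 2 * |u.prod| := by
        rw [ht, Multiset.prod_cons, Multiset.prod_cons, ← mul_assoc, abs_mul, mul_neg, abs_neg,
          abs_mul_self, sq]
    _ ≤ S ^ 2 * B ^ (Multiset.card s - 2) :=
        mul_le_mul_of_nonneg_left (habs.trans (pow_le_pow_right₀ hB1 (by omega))) (sq_nonneg S)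

section Order

variable {R : Type*} [CommRing R] [LinearOrder R] [IsStrictOrderedRing R]

theorem one_le_sum_abs_of_ne_zero {k : ℕ} {a : Fin k → R} (ha : ∀ i, ∃ m : ℤ, a i ^ 2 = m)
    (ha0 : a ≠ 0) : 1 ≤ ∑ i, |a i| := by
  obtain ⟨i, hi⟩ := Function.ne_iff.mp ha0
  obtain ⟨m, hm⟩ := ha i
  have hm_pos : (0 : R) < m := hm ▸ sq_pos_of_ne_zero hi
  have hai : 1 ≤ |a i| := by
    rw [← one_le_sq_iff_one_le_abs, hm]
    exact_mod_cast (Int.cast_pos.mp hm_pos : 0 < m)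
  exact hai.trans (Finset.single_le_sum (fun j _ => abs_nonneg (a j)) (Finset.mem_univ i))

theorem one_le_pow_mul_abs_sum_mul {k : ℕ} (ε a : Fin k → R) (hε : ∀ i, ε i = 1 ∨ ε i = -1)
    (ha : ∀ i, ∃ m : ℤ, a i ^ 2 = m) (hS : ∑ i, ε i * a i ≠ 0) :
    1 ≤ (∑ i, |a i|) ^ (2 ^ (k - 1) - 1) * |∑ i, ε i * a i| := by
  set S := ∑ i, ε i * a i
  set B := ∑ i, |a i|
  have hk : k ≠ 0 := by rintro rfl; simp [S] at hS
  have hB1 : 1 ≤ B := one_le_sum_abs_of_ne_zero ha (by rintro rfl; simp [S] at hS)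
  have hSmem : S ∈ signSums a := sum_mul_mem_signSums ε a hε
  have hsq : 1 ≤ S ^ 2 * B ^ (2 ^ k - 2) := by
    rw [← card_signSums a]
    refine (one_le_abs_prod_filter_ne_zero _ ?_).trans (abs_prod_filter_ne_zero_le hSmem
      (neg_mem_signSums a hSmem) hS (fun x hx => abs_le_of_mem_signSums a hx) hB1)
    simpa using prod_comp_X_sub_C_signSums_mem_intPolys a ha X_mem_intPolys
  have hexp : 2 ^ k - 2 = 2 * (2 ^ (k - 1) - 1) := by
    obtain ⟨k, rfl⟩ := Nat.exists_eq_succ_of_ne_zero hk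
    simp [pow_succ, Nat.mul_sub, mul_comm]
  rw [hexp, pow_mul', ← sq_abs, ← mul_pow, mul_comm |S|] at hsq
  exact (one_le_sq_iff_one_le_abs _).mp hsq |>.trans_eq (abs_of_nonneg (by positivity))

end Order

theorem sqrt_sum_lower_bound (k : ℕ) (sgn : Fin k → ℝ)
    (hsgn : ∀ j, sgn j = 1 ∨ sgn j = -1) :
    ∃ c : ℝ, 0 < c ∧ ∀ n : Fin k → ℕ+,
      (∑ j : Fin k, sgn j * Real.sqrt ((n j : ℕ))) ≠ 0 →
      c * ((Finset.univ.sup fun j : Fin k => (n j : ℕ) : ℕ) : ℝ) ^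
          (-((2 : ℝ) ^ (k - 2) - 1 / 2)) ≤
        |∑ j : Fin k, sgn j * Real.sqrt ((n j : ℕ))| := by
  rcases k.eq_zero_or_pos with rfl | hk
  · exact ⟨1, one_pos, fun n hS => absurd (by simp) hS⟩
  refine ⟨((k : ℝ) ^ (2 ^ (k - 1) - 1))⁻¹, by positivity, fun n hS => ?_⟩
  set N := Finset.univ.sup fun j : Fin k => (n j : ℕ)
  set t := 2 ^ (k - 1) - 1
  have hle : ∀ j, (n j : ℕ) ≤ N := fun j =>
    Finset.le_sup (f := fun j => (n j : ℕ)) (Finset.mem_univ j)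
  have hN : (1 : ℝ) ≤ N := Nat.one_le_cast.mpr ((n ⟨0, hk⟩).pos.trans_le (hle _))
  have hsum : ∑ j, |√(n j : ℕ)| ≤ k * √N := calc
    ∑ j, |√(n j : ℕ)| ≤ ∑ _j : Fin k, √N := Finset.sum_le_sum fun j _ => by
      rw [abs_of_nonneg (Real.sqrt_nonneg _)]
      exact Real.sqrt_le_sqrt (by exact_mod_cast hle j)
    _ = k * √N := by simp
  have hexp : -((2 : ℝ) ^ (k - 2) - 1 / 2) ≤ -(1 / 2 * t) := by
    obtain _ | _ | k := k
    · omega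
    · norm_num [t]
    · simp [t, pow_succ]; linarith
  have hrpow : (√N ^ t)⁻¹ = (N : ℝ) ^ (-(1 / 2 * t : ℝ)) := by
    rw [Real.sqrt_eq_rpow, ← Real.rpow_natCast _ t, ← Real.rpow_mul (Nat.cast_nonneg N),
      Real.rpow_neg (Nat.cast_nonneg N)]
  calc ((k : ℝ) ^ t)⁻¹ * (N : ℝ) ^ (-((2 : ℝ) ^ (k - 2) - 1 / 2))
      ≤ ((k : ℝ) ^ t)⁻¹ * (√N ^ t)⁻¹ := by
        rw [hrpow]
        gcongr
    _ = ((k * √N) ^ t)⁻¹ := by rw [mul_pow, mul_inv]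
    _ ≤ _ := by
      rw [inv_le_iff_one_le_mul₀' (by positivity)]
      exact (one_le_pow_mul_abs_sum_mul sgn _ hsgn (fun j => ⟨n j, by simp⟩) hS).trans
        (mul_le_mul_of_nonneg_right (pow_le_pow_left₀ (by positivity) hsum t) (abs_nonneg _))
end

section
/- Fix an integer k ≥ 3 and a sign pattern (i₁, …, i_{k−1}) ∈ {0,1}^{k−1} with (i₁,…,i_{k−1}) ≠ (0,…,0). There is a constant C > 0 (depending only on k) such that: for all N₁, …, N_k ≥ 1, setting E := max(N₁,…,N_k), and for all 0 < Δ ≤ E^{1/2}, the number of k-tuples of positive integers (n₁,…,n_k) with N_j < n_j ≤ 2N_j for each j and |√n₁ + (−1)^{i₁}√n₂ + ⋯ + (−1)^{i_{k−1}}√n_k| < Δ is at most C·(Δ·E^{−1/2}·N₁N₂⋯N_k + E^{−1}·N₁N₂⋯N_k). -/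
/-!
Let `i` be an index with `N i = E` maximal. If two solutions differ only in the coordinate `i`,
the signed sums differ by `±(√(n i) - √(n' i))`, so `|√(n i) - √(n' i)| < 2Δ`; multiplying by
`√(n i) + √(n' i) ≤ 2√(2E)` shows that `n i` ranges over a window of length `O(Δ √E)`.
Hence there are `O((Δ √E + 1) ∏_{j ≠ i} N j) = O((Δ E^{-1/2} + E⁻¹) ∏ N j)` solutions.
-/

open Finset Real

theorem abs_sub_le_two_mul_sqrt_mul_abs_sqrt_sub {a b X : ℝ} (ha : 0 ≤ a) (hb : 0 ≤ b)
    (haX : a ≤ X) (hbX : b ≤ X) : |a - b| ≤ 2 * √X * |√a - √b| := by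
  have hfactor : a - b = (√a - √b) * (√a + √b) := by
    linear_combination Real.mul_self_sqrt hb - Real.mul_self_sqrt ha
  have hsum : √a + √b ≤ 2 * √X := by
    linarith [Real.sqrt_le_sqrt haX, Real.sqrt_le_sqrt hbX]
  rw [hfactor, abs_mul, abs_of_nonneg (by positivity : 0 ≤ √a + √b), mul_comm]
  exact mul_le_mul_of_nonneg_right hsum (abs_nonneg _)

theorem abs_sub_apply_le_abs_sum_add_abs_sum {ι : Type*} [Fintype ι] {c f g : ι → ℝ} {i : ι}
    (hc : |c i| = 1) (hfg : ∀ j ≠ i, f j = g j) :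
    |f i - g i| ≤ |∑ j, c j * f j| + |∑ j, c j * g j| := by
  have hdiff : ∑ j, c j * f j - ∑ j, c j * g j = c i * (f i - g i) := by
    rw [← sum_sub_distrib, sum_eq_single i (fun j _ hj => by rw [hfg j hj, sub_self])
      (fun h => absurd (mem_univ i) h), mul_sub]
  calc |f i - g i| = |∑ j, c j * f j - ∑ j, c j * g j| := by rw [hdiff, abs_mul, hc, one_mul]
    _ ≤ |∑ j, c j * f j| + |∑ j, c j * g j| := abs_sub _ _

theorem sub_le_of_abs_sum_mul_sqrt_lt {ι : Type*} [Fintype ι] {c : ι → ℝ} {i : ι}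
    (hc : |c i| = 1) {n n' : ι → ℕ} {X Δ : ℝ} (hnX : (n i : ℝ) ≤ X) (hn'X : (n' i : ℝ) ≤ X)
    (hn : |∑ j, c j * √(n j)| < Δ) (hn' : |∑ j, c j * √(n' j)| < Δ)
    (hagree : ∀ j ≠ i, n j = n' j) :
    (n i : ℝ) - n' i ≤ 4 * Δ * √X := by
  have hroots := abs_sub_apply_le_abs_sum_add_abs_sum (f := fun j => √(n j))
    (g := fun j => √(n' j)) hc fun j hj => by simp only [hagree j hj]
  calc (n i : ℝ) - n' i ≤ |(n i : ℝ) - n' i| := le_abs_self _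
    _ ≤ 2 * √X * |√(n i) - √(n' i)| :=
        abs_sub_le_two_mul_sqrt_mul_abs_sqrt_sub (Nat.cast_nonneg _) (Nat.cast_nonneg _) hnX hn'X
    _ ≤ 2 * √X * (2 * Δ) := by gcongr; linarith
    _ = 4 * Δ * √X := by ring

theorem Finset.card_le_floor_add_one_of_sub_le (u : Finset ℕ) {w : ℝ}
    (h : ∀ x ∈ u, ∀ y ∈ u, (x : ℝ) - y ≤ w) : #u ≤ ⌊w⌋₊ + 1 := by
  rcases u.eq_empty_or_nonempty with rfl | hu
  · simp
  set m := u.min' hu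
  have hsub : u ⊆ Icc m (m + ⌊w⌋₊) := fun x hx => by
    have hmx : m ≤ x := u.min'_le x hx
    have : ((x - m : ℕ) : ℝ) ≤ w := by
      rw [Nat.cast_sub hmx]; exact h x hx m (u.min'_mem hu)
    have := Nat.le_floor this
    exact mem_Icc.mpr ⟨hmx, by omega⟩
  calc #u ≤ #(Icc m (m + ⌊w⌋₊)) := card_le_card hsub
    _ = ⌊w⌋₊ + 1 := by rw [Nat.card_Icc]; omega

theorem card_le_of_sub_apply_le {ι : Type*} [Fintype ι] [DecidableEq ι] (i : ι)
    {A : ι → Finset ℕ} {s : Finset (ι → ℕ)} (hs : s ⊆ Fintype.piFinset A) {w : ℝ}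
    (hw : ∀ n ∈ s, ∀ n' ∈ s, (∀ j ≠ i, n j = n' j) → (n i : ℝ) - n' i ≤ w) :
    #s ≤ (⌊w⌋₊ + 1) * ∏ j ∈ univ.erase i, #(A j) := by
  set forget : (ι → ℕ) → (ι → ℕ) := fun n => Function.update n i 0
  have hfiber : ∀ a ∈ s.image forget, #{n ∈ s | forget n = a} ≤ ⌊w⌋₊ + 1 := by
    intro a _
    set t := s.filter fun n => forget n = a
    have hagree : ∀ n ∈ t, ∀ n' ∈ t, ∀ j ≠ i, n j = n' j := by
      intro n hn n' hn' j hj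
      have := congrFun ((mem_filter.mp hn).2.trans (mem_filter.mp hn').2.symm) j
      simpa [forget, Function.update_of_ne hj] using this
    have hinj : Set.InjOn (fun n : ι → ℕ => n i) t :=
      fun n hn n' hn' heq => funext fun j =>
        if hj : j = i then hj ▸ heq else hagree n hn n' hn' j hj
    rw [← card_image_of_injOn hinj]
    refine card_le_floor_add_one_of_sub_le _ ?_
    simp only [mem_image]
    rintro _ ⟨n, hn, rfl⟩ _ ⟨n', hn', rfl⟩
    exact hw n (mem_filter.mp hn).1 n' (mem_filter.mp hn').1 (hagree n hn n' hn')
  have himage : s.image forget ⊆ Fintype.piFinset (Function.update A i {0}) := by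
    simp only [subset_iff, mem_image, Fintype.mem_piFinset]
    rintro _ ⟨n, hn, rfl⟩ j
    rcases eq_or_ne j i with rfl | hj
    · simp [forget]
    · simpa [forget, Function.update_of_ne hj] using Fintype.mem_piFinset.mp (hs hn) j
  have hcard : #(Fintype.piFinset (Function.update A i {0})) = ∏ j ∈ univ.erase i, #(A j) := by
    rw [Fintype.card_piFinset, ← mul_prod_erase univ _ (mem_univ i)]
    simp only [Function.update_self, card_singleton, one_mul]
    exact prod_congr rfl fun j hj => by rw [Function.update_of_ne (ne_of_mem_erase hj)]
  calc #s ≤ (⌊w⌋₊ + 1) * #(s.image forget) := card_le_mul_card_image s _ hfiber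
    _ ≤ (⌊w⌋₊ + 1) * ∏ j ∈ univ.erase i, #(A j) := by
        rw [← hcard]; exact Nat.mul_le_mul_left _ (card_le_card himage)

theorem mem_Ioc_floor_iff {N : ℝ} (hN : 0 ≤ N) {n : ℕ} :
    n ∈ Ioc ⌊N⌋₊ ⌊2 * N⌋₊ ↔ N < n ∧ (n : ℝ) ≤ 2 * N := by
  rw [mem_Ioc, Nat.floor_lt hN, Nat.le_floor_iff (by positivity)]

theorem card_Ioc_floor_le {N : ℝ} (hN : 1 ≤ N) : (#(Ioc ⌊N⌋₊ ⌊2 * N⌋₊) : ℝ) ≤ 2 * N := by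
  rw [Nat.card_Ioc, Nat.cast_sub (Nat.floor_le_floor (by linarith))]
  linarith [Nat.floor_le (by linarith : (0 : ℝ) ≤ 2 * N), Nat.lt_floor_add_one N]

section DyadicBox

variable {ι : Type*} [Fintype ι] [DecidableEq ι]

noncomputable def dyadicBox (N : ι → ℝ) : Finset (ι → ℕ) :=
  Fintype.piFinset fun j => Ioc ⌊N j⌋₊ ⌊2 * N j⌋₊

theorem mem_dyadicBox {N : ι → ℝ} (hN : ∀ j, 0 ≤ N j) {n : ι → ℕ} :
    n ∈ dyadicBox N ↔ ∀ j, N j < n j ∧ (n j : ℝ) ≤ 2 * N j := by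
  simp only [dyadicBox, Fintype.mem_piFinset, mem_Ioc_floor_iff (hN _)]

/-- Along each line in direction `i` the solutions lie in a window of width
`4 * Δ * √(2 * N i) ≤ 8 * Δ * √(N i)`. -/
theorem card_filter_dyadicBox_abs_sum_mul_sqrt_lt_le {N : ι → ℝ} (hN : ∀ j, 1 ≤ N j)
    {c : ι → ℝ} {i : ι} (hc : |c i| = 1) {Δ : ℝ} (hΔ : 0 ≤ Δ) :
    (#{n ∈ dyadicBox N | |∑ j, c j * √(n j)| < Δ} : ℝ) ≤
      (8 * Δ * √(N i) + 1) * ∏ j ∈ univ.erase i, 2 * N j := by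
  set s := {n ∈ dyadicBox N | |∑ j, c j * √(n j)| < Δ}
  have hle : ∀ n ∈ s, (n i : ℝ) ≤ 2 * N i := fun n hn =>
    ((mem_dyadicBox fun j => zero_le_one.trans (hN j)).mp (mem_filter.mp hn).1 i).2
  have hcount := card_le_of_sub_apply_le i (filter_subset _ (dyadicBox N))
    fun n hn n' hn' hagree => sub_le_of_abs_sum_mul_sqrt_lt hc (hle n hn) (hle n' hn')
      (mem_filter.mp hn).2 (mem_filter.mp hn').2 hagree
  have hwidth : (⌊4 * Δ * √(2 * N i)⌋₊ + 1 : ℝ) ≤ 8 * Δ * √(N i) + 1 := by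
    have hsqrt : √(2 * N i) ≤ 2 * √(N i) := by
      rw [Real.sqrt_le_left (by positivity), mul_pow, Real.sq_sqrt (by linarith [hN i])]
      linarith [hN i]
    have := Nat.floor_le (by positivity : 0 ≤ 4 * Δ * √(2 * N i))
    nlinarith
  calc (#s : ℝ) ≤ (⌊4 * Δ * √(2 * N i)⌋₊ + 1) *
        ∏ j ∈ univ.erase i, (#(Ioc ⌊N j⌋₊ ⌊2 * N j⌋₊) : ℝ) := by
        exact_mod_cast hcount
    _ ≤ (8 * Δ * √(N i) + 1) * ∏ j ∈ univ.erase i, 2 * N j :=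
        mul_le_mul hwidth (prod_le_prod (fun _ _ => Nat.cast_nonneg _)
          fun j _ => card_Ioc_floor_le (hN j)) (prod_nonneg fun _ _ => Nat.cast_nonneg _)
          (by positivity)

theorem add_one_mul_prod_erase_le {N : ι → ℝ} (hN : ∀ j, 1 ≤ N j) (i : ι) (Δ : ℝ) :
    (8 * Δ * √(N i) + 1) * ∏ j ∈ univ.erase i, 2 * N j ≤
      2 ^ (Fintype.card ι + 2) *
        (Δ * N i ^ (-(1 : ℝ) / 2) * ∏ j, N j + (N i)⁻¹ * ∏ j, N j) := by
  have hsplit : 2 * N i * ∏ j ∈ univ.erase i, 2 * N j = 2 ^ Fintype.card ι * ∏ j, N j := by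
    rw [mul_prod_erase univ (fun j => 2 * N j) (mem_univ i), prod_mul_distrib, prod_const,
      card_univ]
  have hNi : 0 < N i := by linarith [hN i]
  have hsq := Real.sq_sqrt hNi.le
  have hrhs : 2 ^ (Fintype.card ι + 2) *
      (Δ * N i ^ (-(1 : ℝ) / 2) * ∏ j, N j + (N i)⁻¹ * ∏ j, N j) =
      8 * (Δ * √(N i) + 1) * ∏ j ∈ univ.erase i, 2 * N j := by
    rw [neg_div, Real.rpow_neg hNi.le, ← Real.sqrt_eq_rpow]
    have : 0 < √(N i) := Real.sqrt_pos.mpr hNi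
    field_simp
    linear_combination (-4 * (Δ * N i + √(N i))) * hsplit -
      8 * Δ * N i * (∏ j ∈ univ.erase i, 2 * N j) * hsq
  rw [hrhs]
  gcongr
  · exact prod_nonneg fun j _ => by linarith [hN j]
  · linarith

end DyadicBox

theorem count_sqrt_inequality_solutions (k : ℕ) (hk : 3 ≤ k) (sgn : Fin k → ℝ)
    (hsgn : ∀ j, sgn j = 1 ∨ sgn j = -1) :
    ∃ C : ℝ, 0 < C ∧ ∀ (N : Fin k → ℝ) (Δ E : ℝ), (∀ j, 1 ≤ N j) →
      E = Finset.univ.sup' ⟨⟨0, by omega⟩, Finset.mem_univ _⟩ N →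
      0 < Δ → Δ ≤ E ^ ((1 : ℝ) / 2) →
      (Set.ncard {n : Fin k → ℕ | (∀ j, N j < (n j : ℝ) ∧ (n j : ℝ) ≤ 2 * N j) ∧
          |∑ j : Fin k, sgn j * Real.sqrt (n j)| < Δ} : ℝ) ≤
        C * (Δ * E ^ (-(1 : ℝ) / 2) * ∏ j : Fin k, N j +
             E⁻¹ * ∏ j : Fin k, N j) := by
  refine ⟨2 ^ (k + 2), by positivity, fun N Δ E hN hE hΔ _ => ?_⟩
  obtain ⟨i, -, hi⟩ := exists_mem_eq_sup' ⟨⟨0, by omega⟩, mem_univ _⟩ N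
  have hs : {n : Fin k → ℕ | (∀ j, N j < (n j : ℝ) ∧ (n j : ℝ) ≤ 2 * N j) ∧
      |∑ j, sgn j * √(n j)| < Δ} = {n ∈ dyadicBox N | |∑ j, sgn j * √(n j)| < Δ} := by
    ext n
    simp [mem_dyadicBox fun j => zero_le_one.trans (hN j)]
  have hc : |sgn i| = 1 := by rcases hsgn i with h | h <;> simp [h]
  rw [hs, Set.ncard_coe_finset, hE, hi]
  calc _ ≤ (8 * Δ * √(N i) + 1) * ∏ j ∈ univ.erase i, 2 * N j :=
        card_filter_dyadicBox_abs_sum_mul_sqrt_lt_le hN hc hΔ.le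
    _ ≤ _ := by simpa using add_one_mul_prod_erase_le hN i Δ
end

section
/- There is an absolute constant C > 0 such that for all T ≥ 2, Σ_{m < n ≤ T} d(n)·d(m)/((n·m)^{3/4}·(√n − √m)) ≤ C·(log T)^5, where the sum is over pairs of positive integers m < n ≤ T. -/
/-!
Since `√n - √m ≥ (n - m) / (2√n)` and `n ^ (1/4) m ^ (3/4) ≥ m`, the `(n, m)` term is at most
`2 d(n) d(m) / (m (n - m))`. With `2 d(n) d(m) ≤ d(n)² + d(m)²` and
`1 / (m (n - m)) = (1/n) (1/m + 1/(n - m))` it is bounded by a sum of three terms `u(i) v(j)` with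
`u(k) = d(k)² / k`, `v(k) = 1 / k`, and `(n, m) ↦ (i, j)` is `(m, n - m)`, `(n, m)` or `(n, n - m)`:
each is injective from the triangle `1 ≤ m < n ≤ N` into the square `[1, N]²`, so the whole sum is
at most `3 (∑ u) (∑ v)`. Here `∑ v = H_N ≤ 1 + log N`, and `∑ u ≤ H_N⁴` because
`(a, b) ↦ (g, a/g, b/g, k / lcm(a, b))`, `g = gcd(a, b)`, embeds pairs of divisors of `k` into
the factorizations of `k` into four factors, and `∑_{k ≤ N} d₄(k) / k ≤ H_N⁴`.
-/

/-- The divisor function `d(n)`. -/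
def divfun (n : ℕ) : ℕ := n.divisors.card

open Finset Real

theorem Finset.sum_comp_le_sum_of_injOn {ι κ M : Type*} [AddCommMonoid M] [PartialOrder M]
    [IsOrderedAddMonoid M] [DecidableEq κ] {s : Finset ι} {t : Finset κ} (e : ι → κ)
    (he : Set.InjOn e s) (hst : Set.MapsTo e s t) {f : κ → M} (hf : ∀ y ∈ t, 0 ≤ f y) :
    ∑ x ∈ s, f (e x) ≤ ∑ y ∈ t, f y := by
  rw [← sum_image he]
  exact sum_le_sum_of_subset_of_nonneg (image_subset_iff.2 hst) fun y hy _ => hf y hy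

theorem Nat.gcd_mul_div_gcd_mul_div_gcd (a b : ℕ) :
    gcd a b * (a / gcd a b) * (b / gcd a b) = lcm a b := by
  rw [Nat.mul_div_cancel' (gcd_dvd_left a b), Nat.lcm, Nat.mul_div_assoc _ (gcd_dvd_right a b)]

theorem Nat.card_divisors_sq_le_card_finMulAntidiag (n : ℕ) :
    n.divisors.card ^ 2 ≤ (finMulAntidiag 4 n).card := by
  rw [sq, ← card_product]
  refine card_le_card_of_injOn
    (fun p => ![gcd p.1 p.2, p.1 / gcd p.1 p.2, p.2 / gcd p.1 p.2, n / lcm p.1 p.2]) ?_ ?_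
  · rintro ⟨a, b⟩ hab
    simp only [coe_product, Set.mem_prod, mem_coe, mem_divisors] at hab
    obtain ⟨⟨ha, hn⟩, hb, -⟩ := hab
    rw [mem_coe, mem_finMulAntidiag, Fin.prod_univ_four]
    refine ⟨?_, hn⟩
    simp only [Matrix.cons_val]
    rw [Nat.gcd_mul_div_gcd_mul_div_gcd, Nat.mul_div_cancel' (Nat.lcm_dvd ha hb)]
  · rintro ⟨a, b⟩ - ⟨a', b'⟩ - h
    have hg := congrFun h 0
    have ha := congrFun h 1
    have hb := congrFun h 2
    simp only [Matrix.cons_val] at hg ha hb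
    have left (x y : ℕ) : x = gcd x y * (x / gcd x y) :=
      (Nat.mul_div_cancel' (gcd_dvd_left x y)).symm
    have right (x y : ℕ) : y = gcd x y * (y / gcd x y) :=
      (Nat.mul_div_cancel' (gcd_dvd_right x y)).symm
    refine Prod.ext ?_ ?_
    · rw [left a b, left a' b', ha, hg]
    · rw [right a b, right a' b', hb, hg]

theorem Nat.sum_card_finMulAntidiag_div_le (d N : ℕ) :
    ∑ n ∈ Icc 1 N, ((finMulAntidiag d n).card : ℝ) / n ≤ (∑ k ∈ Icc 1 N, (k : ℝ)⁻¹) ^ d := by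
  have hterm (n : ℕ) : ((finMulAntidiag d n).card : ℝ) / n =
      ∑ f ∈ finMulAntidiag d n, ∏ i, (f i : ℝ)⁻¹ := by
    rw [div_eq_mul_inv, ← nsmul_eq_mul, ← sum_const]
    refine sum_congr rfl fun f hf => ?_
    rw [← prod_eq_of_mem_finMulAntidiag hf, Nat.cast_prod, prod_inv_distrib]
  calc ∑ n ∈ Icc 1 N, ((finMulAntidiag d n).card : ℝ) / n
      = ∑ x ∈ (Icc 1 N).sigma (finMulAntidiag d), ∏ i, (x.2 i : ℝ)⁻¹ := by
        rw [sum_sigma]; exact sum_congr rfl fun n _ => hterm n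
    _ ≤ ∑ f ∈ Fintype.piFinset fun _ => Icc 1 N, ∏ i, (f i : ℝ)⁻¹ := by
        refine sum_comp_le_sum_of_injOn (fun x : (_ : ℕ) × (Fin d → ℕ) => x.2)
          (f := fun f => ∏ i, (f i : ℝ)⁻¹) ?_ ?_ fun f _ => by positivity
        · rintro ⟨n, f⟩ hf ⟨n', f'⟩ hf' (rfl : f = f')
          simp only [coe_sigma, Set.mem_sigma_iff, mem_coe] at hf hf'
          obtain rfl : n = n' := (prod_eq_of_mem_finMulAntidiag hf.2).symm.trans
            (prod_eq_of_mem_finMulAntidiag hf'.2)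
          rfl
        · rintro ⟨n, f⟩ hf
          simp only [coe_sigma, Set.mem_sigma_iff, mem_coe, mem_Icc] at hf
          refine Fintype.mem_piFinset.2 fun i => mem_Icc.2 ?_
          have hfi := Nat.le_of_dvd (by omega) (dvd_of_mem_finMulAntidiag hf.2 i)
          have hfi0 := ne_zero_of_mem_finMulAntidiag hf.2 i
          exact ⟨Nat.one_le_iff_ne_zero.2 hfi0, hfi.trans hf.1.2⟩
    _ = ∏ _i : Fin d, ∑ k ∈ Icc 1 N, (k : ℝ)⁻¹ :=
        (prod_univ_sum (fun _ => Icc 1 N) fun _ k => (k : ℝ)⁻¹).symm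
    _ = (∑ k ∈ Icc 1 N, (k : ℝ)⁻¹) ^ d := by rw [prod_const, Finset.card_univ, Fintype.card_fin]

theorem Nat.sum_sq_card_divisors_div_le (N : ℕ) :
    ∑ n ∈ Icc 1 N, (n.divisors.card : ℝ) ^ 2 / n ≤ (∑ k ∈ Icc 1 N, (k : ℝ)⁻¹) ^ 4 := by
  refine (sum_le_sum fun n _ => ?_).trans (sum_card_finMulAntidiag_div_le 4 N)
  gcongr
  exact_mod_cast card_divisors_sq_le_card_finMulAntidiag n

theorem Real.mul_sub_le_two_mul_rpow_mul_sqrt_sub {x y : ℝ} (hy : 0 ≤ y) (hyx : y ≤ x) :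
    y * (x - y) ≤ 2 * ((x * y) ^ (3 / 4 : ℝ) * (√x - √y)) := by
  have fourth_power {z : ℝ} (hz : 0 ≤ z) : ∃ r, 0 ≤ r ∧ z = r ^ 4 :=
    ⟨z ^ (1 / 4 : ℝ), by positivity, by rw [← rpow_natCast, ← rpow_mul hz]; norm_num⟩
  obtain ⟨t, ht, rfl⟩ := fourth_power (hy.trans hyx)
  obtain ⟨s, hs, rfl⟩ := fourth_power hy
  have hst : s ≤ t := (pow_le_pow_iff_left₀ hs ht (by norm_num)).1 hyx
  have hsqrt {r : ℝ} (hr : 0 ≤ r) : √(r ^ 4) = r ^ 2 := by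
    rw [show r ^ 4 = (r ^ 2) ^ 2 by ring, sqrt_sq (by positivity)]
  have hrpow : (t ^ 4 * s ^ 4) ^ (3 / 4 : ℝ) = (t * s) ^ 3 := by
    rw [← mul_pow, ← rpow_natCast, ← rpow_mul (by positivity)]
    norm_num
  rw [hrpow, hsqrt ht, hsqrt hs]
  -- the right side minus the left side is this product
  have : 0 ≤ s ^ 3 * (t ^ 2 - s ^ 2) * (t ^ 2 * (t - s) + (t ^ 3 - s ^ 3)) := by
    have : s ^ 3 ≤ t ^ 3 := by gcongr
    have : s ^ 2 ≤ t ^ 2 := by gcongr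
    have : 0 ≤ t - s := by linarith
    positivity
  linarith [this]

theorem Real.mul_div_rpow_mul_sqrt_sub_le {a b x y : ℝ} (ha : 0 ≤ a) (hb : 0 ≤ b) (hy : 0 < y)
    (hyx : y < x) :
    a * b / ((x * y) ^ (3 / 4 : ℝ) * (√x - √y)) ≤
      b ^ 2 / y * (x - y)⁻¹ + a ^ 2 / x * y⁻¹ + a ^ 2 / x * (x - y)⁻¹ := by
  have hx : 0 < x := hy.trans hyx
  have hxy : 0 < x - y := sub_pos.2 hyx
  have hden := mul_sub_le_two_mul_rpow_mul_sqrt_sub hy.le hyx.le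
  calc a * b / ((x * y) ^ (3 / 4 : ℝ) * (√x - √y))
      ≤ a * b / (y * (x - y) / 2) := by gcongr; linarith
    _ ≤ (a ^ 2 + b ^ 2) / (y * (x - y)) := by
        rw [div_div_eq_mul_div, mul_comm]
        gcongr
        nlinarith [sq_nonneg (a - b)]
    _ = b ^ 2 / y * (x - y)⁻¹ + a ^ 2 / x * y⁻¹ + a ^ 2 / x * (x - y)⁻¹ := by
        field_simp
        ring

def triangle (N : ℕ) : Finset (ℕ × ℕ) := {p ∈ Icc 1 N ×ˢ Icc 1 N | p.2 < p.1}

theorem sum_Icc_sum_Ico_eq_sum_triangle {M : Type*} [AddCommMonoid M] (N : ℕ) (F : ℕ → ℕ → M) :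
    ∑ n ∈ Icc 1 N, ∑ m ∈ Ico 1 n, F n m = ∑ p ∈ triangle N, F p.1 p.2 :=
  (sum_finset_product' _ _ _ fun p => by
    simp only [triangle, mem_filter, mem_product, mem_Icc, mem_Ico]
    omega).symm

theorem sum_triangle_le_sum_mul_sum (N : ℕ) {u v : ℕ → ℝ} (hu : ∀ k ∈ Icc 1 N, 0 ≤ u k)
    (hv : ∀ k ∈ Icc 1 N, 0 ≤ v k) (e : ℕ × ℕ → ℕ × ℕ) (he : Set.InjOn e (triangle N))
    (hmaps : ∀ p ∈ triangle N, e p ∈ Icc 1 N ×ˢ Icc 1 N) :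
    ∑ p ∈ triangle N, u (e p).1 * v (e p).2 ≤ (∑ k ∈ Icc 1 N, u k) * ∑ k ∈ Icc 1 N, v k := by
  rw [sum_mul_sum, ← sum_product']
  refine sum_comp_le_sum_of_injOn e he (fun p hp => hmaps p hp) (f := fun q => u q.1 * v q.2)
    fun q hq => ?_
  rw [mem_product] at hq
  exact mul_nonneg (hu _ hq.1) (hv _ hq.2)

theorem sum_divisor_double_sum_le (N : ℕ) :
    ∑ n ∈ Icc 1 N, ∑ m ∈ Ico 1 n, (divfun n : ℝ) * divfun m /
        (((n : ℝ) * m) ^ (3 / 4 : ℝ) * (√n - √m)) ≤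
      3 * (∑ k ∈ Icc 1 N, (k : ℝ)⁻¹) ^ 5 := by
  set H := ∑ k ∈ Icc 1 N, (k : ℝ)⁻¹
  set u : ℕ → ℝ := fun k => (divfun k : ℝ) ^ 2 / k
  set v : ℕ → ℝ := fun k => (k : ℝ)⁻¹
  have bound (e : ℕ × ℕ → ℕ × ℕ) (he : Set.InjOn e (triangle N))
      (hmaps : ∀ p ∈ triangle N, e p ∈ Icc 1 N ×ˢ Icc 1 N) :
      ∑ p ∈ triangle N, u (e p).1 * v (e p).2 ≤ H ^ 5 := by
    refine (sum_triangle_le_sum_mul_sum N (fun k _ => by positivity) (fun k _ => by positivity)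
      e he hmaps).trans ?_
    rw [pow_succ]
    exact mul_le_mul (Nat.sum_sq_card_divisors_div_le N) le_rfl
      (sum_nonneg fun k _ => by positivity) (by positivity)
  rw [sum_Icc_sum_Ico_eq_sum_triangle]
  calc _ ≤ ∑ p ∈ triangle N, (u p.2 * v (p.1 - p.2) + u p.1 * v p.2 + u p.1 * v (p.1 - p.2)) := by
        refine sum_le_sum fun p hp => ?_
        simp only [triangle, mem_filter, mem_product, mem_Icc] at hp
        simp only [u, v, Nat.cast_sub hp.2.le]
        exact mul_div_rpow_mul_sqrt_sub_le (by positivity) (by positivity)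
          (by exact_mod_cast hp.1.2.1) (by exact_mod_cast hp.2)
    _ ≤ 3 * H ^ 5 := by
        rw [sum_add_distrib, sum_add_distrib]
        have h₁ := bound (fun p => (p.2, p.1 - p.2)) ?_ ?_
        have h₂ := bound id ?_ ?_
        have h₃ := bound (fun p => (p.1, p.1 - p.2)) ?_ ?_
        · dsimp only [id] at h₁ h₂ h₃
          linarith
        all_goals
          intro p hp
          try intro q hq h
          simp only [triangle, coe_filter, mem_filter, mem_product, mem_Icc, Set.mem_ofPred_eq, id,
            Prod.ext_iff] at *
          omega

theorem sum_Icc_floor_inv_le_three_mul_log {T : ℝ} (hT : 2 ≤ T) :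
    ∑ k ∈ Icc 1 ⌊T⌋₊, (k : ℝ)⁻¹ ≤ 3 * log T := by
  have hharmonic : ∑ k ∈ Icc 1 ⌊T⌋₊, (k : ℝ)⁻¹ ≤ 1 + log ⌊T⌋₊ := by
    simpa [harmonic_eq_sum_Icc] using harmonic_le_one_add_log ⌊T⌋₊
  have hfloor : log ⌊T⌋₊ ≤ log T :=
    log_le_log (by exact_mod_cast Nat.floor_pos.2 (by linarith)) (Nat.floor_le (by linarith))
  have hlog : log 2 ≤ log T := log_le_log two_pos hT
  linarith [log_two_gt_d9]

theorem divisor_double_sum_bound :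
    ∃ C : ℝ, 0 < C ∧ ∀ T : ℝ, 2 ≤ T →
      (∑ n ∈ Finset.Icc 1 ⌊T⌋₊, ∑ m ∈ Finset.Ico 1 n,
          (divfun n : ℝ) * (divfun m : ℝ) /
            (((n : ℝ) * (m : ℝ)) ^ ((3 : ℝ) / 4) * (Real.sqrt n - Real.sqrt m))) ≤
        C * Real.log T ^ 5 := by
  refine ⟨3 ^ 6, by norm_num, fun T hT => ?_⟩
  calc _ ≤ 3 * (∑ k ∈ Icc 1 ⌊T⌋₊, (k : ℝ)⁻¹) ^ 5 := sum_divisor_double_sum_le _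
    _ ≤ 3 * (3 * log T) ^ 5 := by
        gcongr
        exact sum_Icc_floor_inv_le_three_mul_log hT
    _ = 3 ^ 6 * log T ^ 5 := by ring
end
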